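/- arXiv:2007.10824 — 9 statements merged into one kernel-verified Lean document; each statement's English description precedes it below -/
import Mathlib

section
/- Let βmin ≤ βmax be reals, τ ∈ (0,1], and x ∈ ℝ. Suppose β ∈ [βmin, βmax] satisfies: (β = βmin or μ_β({y : y < x}) ≥ τ) and (β = βmax or μ_β({y : y ≥ x}) ≥ τ). Then for every α ∈ [βmin, βmax], μ_β(x) ≥ τ·μ_α(x); in particular μ_β(x) ≥ τ·Δ(x), where Δ(x) = max_{α∈[βmin,βmax]} μ_α(x). -/
/-- Partition function of a continuous Gibbs distribution with counts `c`
(finite support): `Z(β) = ∑_x c(x)·e^{βx}`. -/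
noncomputable def gibbsZ (c : ℝ → ℝ) (hc : (Function.support c).Finite) (β : ℝ) : ℝ :=
  ∑ x ∈ hc.toFinset, c x * Real.exp (β * x)

/-- Induced Gibbs distribution: `μ_β(x) = c(x)·e^{βx}/Z(β)`. -/
noncomputable def gibbsMu (c : ℝ → ℝ) (hc : (Function.support c).Finite) (β x : ℝ) : ℝ :=
  c x * Real.exp (β * x) / gibbsZ c hc β

/-- Measure of a set: `μ_β(S) = ∑_{x∈S} μ_β(x)`. -/
noncomputable def gibbsMuSet (c : ℝ → ℝ) (hc : (Function.support c).Finite) (β : ℝ)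
    (S : Set ℝ) : ℝ :=
  ∑ x ∈ hc.toFinset, S.indicator (gibbsMu c hc β) x


lemma gibbsZ_pos (c : ℝ → ℝ) (hc : (Function.support c).Finite)
    (hnonneg : ∀ x, 0 ≤ c x) (hne : c ≠ 0) (β : ℝ) : 0 < gibbsZ c hc β := by
  obtain ⟨y, hy⟩ : ∃ y, c y ≠ 0 := Function.ne_iff.mp hne
  have hyF : y ∈ hc.toFinset := by simp [Function.mem_support, hy]
  apply Finset.sum_pos' (fun z _ => mul_nonneg (hnonneg z) (Real.exp_pos _).le)
  exact ⟨y, hyF, mul_pos ((hnonneg y).lt_of_ne (Ne.symm hy)) (Real.exp_pos _)⟩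

lemma gibbs_key (c : ℝ → ℝ) (hc : (Function.support c).Finite)
    (hnonneg : ∀ x, 0 ≤ c x) (hne : c ≠ 0) (β α x τ : ℝ) (hτ0 : 0 < τ)
    (S : Set ℝ) (hS : ∀ y ∈ S, (α - β) * x ≤ (α - β) * y)
    (hμ : τ ≤ gibbsMuSet c hc β S) :
    τ * gibbsMu c hc α x ≤ gibbsMu c hc β x := by
  have hZβ := gibbsZ_pos c hc hnonneg hne β
  have hZα := gibbsZ_pos c hc hnonneg hne α
  have key : τ * Real.exp ((α - β) * x) * gibbsZ c hc β ≤ gibbsZ c hc α := by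
    have hT : τ * gibbsZ c hc β ≤
        ∑ y ∈ hc.toFinset, S.indicator (fun y => c y * Real.exp (β * y)) y := by
      have : gibbsMuSet c hc β S =
          (∑ y ∈ hc.toFinset, S.indicator (fun y => c y * Real.exp (β * y)) y)
            / gibbsZ c hc β := by
        unfold gibbsMuSet gibbsMu
        rw [Finset.sum_div]
        refine Finset.sum_congr rfl fun y _ => ?_
        by_cases hy : y ∈ S <;> simp [Set.indicator_of_mem, Set.indicator_of_notMem, hy]
      rw [this, le_div_iff₀ hZβ] at hμ
      linarith
    calc τ * Real.exp ((α - β) * x) * gibbsZ c hc β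
        = Real.exp ((α - β) * x) * (τ * gibbsZ c hc β) := by ring
      _ ≤ Real.exp ((α - β) * x) *
          ∑ y ∈ hc.toFinset, S.indicator (fun y => c y * Real.exp (β * y)) y := by
          exact mul_le_mul_of_nonneg_left hT (Real.exp_pos _).le
      _ = ∑ y ∈ hc.toFinset,
          S.indicator (fun y => Real.exp ((α - β) * x) * (c y * Real.exp (β * y))) y := by
          rw [Finset.mul_sum]
          exact Finset.sum_congr rfl fun y _ => (Set.indicator_const_mul S _ _ y).symm
      _ ≤ ∑ y ∈ hc.toFinset, c y * Real.exp (α * y) := by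
          refine Finset.sum_le_sum fun y _ => ?_
          have h2 : ∀ z ∈ S, Real.exp ((α - β) * x) * (c z * Real.exp (β * z))
              ≤ c z * Real.exp (α * z) := by
            intro z hz
            have : Real.exp ((α - β) * x) ≤ Real.exp ((α - β) * z) :=
              Real.exp_le_exp.mpr (hS z hz)
            calc Real.exp ((α - β) * x) * (c z * Real.exp (β * z))
                ≤ Real.exp ((α - β) * z) * (c z * Real.exp (β * z)) := by
                  exact mul_le_mul_of_nonneg_right this
                    (mul_nonneg (hnonneg z) (Real.exp_pos _).le)
              _ = c z * Real.exp (α * z) := by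
                  rw [show α * z = (α - β) * z + β * z by ring, Real.exp_add]; ring
          by_cases hy : y ∈ S
          · rw [Set.indicator_of_mem hy]; exact h2 y hy
          · rw [Set.indicator_of_notMem hy]
            exact mul_nonneg (hnonneg y) (Real.exp_pos _).le
  unfold gibbsMu
  rw [mul_div_assoc', div_le_div_iff₀ hZα hZβ]
  have hx : Real.exp (α * x) = Real.exp (β * x) * Real.exp ((α - β) * x) := by
    rw [← Real.exp_add]; ring_nf
  have hcx := hnonneg x
  have hb := (Real.exp_pos (β * x)).le
  calc τ * (c x * Real.exp (α * x)) * gibbsZ c hc β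
      = (c x * Real.exp (β * x)) * (τ * Real.exp ((α - β) * x) * gibbsZ c hc β) := by
        rw [hx]; ring
    _ ≤ (c x * Real.exp (β * x)) * gibbsZ c hc α :=
        mul_le_mul_of_nonneg_left key (mul_nonneg hcx hb)

/-- If `β ∈ [βmin, βmax]` satisfies: (`β = βmin` or `μ_β({y : y < x}) ≥ τ`) and
(`β = βmax` or `μ_β({y : y ≥ x}) ≥ τ`), then for every `α ∈ [βmin, βmax]`,
`μ_β(x) ≥ τ·μ_α(x)`; in particular `μ_β(x) ≥ τ·Δ(x)` where
`Δ(x) = max_{α∈[βmin,βmax]} μ_α(x)`. -/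
theorem stmt_1 (n : ℝ) (hn : 1 ≤ n) (c : ℝ → ℝ) (hc : (Function.support c).Finite)
    (hsupp : Function.support c ⊆ {0} ∪ Set.Icc 1 n)
    (hnonneg : ∀ x, 0 ≤ c x) (hne : c ≠ 0)
    (βmin βmax : ℝ) (hββ : βmin ≤ βmax) (τ : ℝ) (hτ : τ ∈ Set.Ioc (0 : ℝ) 1) (x : ℝ)
    (β : ℝ) (hβ : β ∈ Set.Icc βmin βmax)
    (h₁ : β = βmin ∨ τ ≤ gibbsMuSet c hc β {y | y < x})
    (h₂ : β = βmax ∨ τ ≤ gibbsMuSet c hc β {y | x ≤ y}) :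
    (∀ α ∈ Set.Icc βmin βmax, τ * gibbsMu c hc α x ≤ gibbsMu c hc β x)
    ∧ τ * sSup ((fun α => gibbsMu c hc α x) '' Set.Icc βmin βmax) ≤ gibbsMu c hc β x := by
  obtain ⟨hτ0, hτ1⟩ := hτ
  have hZ := fun γ => gibbsZ_pos c hc hnonneg hne γ
  have part1 : ∀ α ∈ Set.Icc βmin βmax, τ * gibbsMu c hc α x ≤ gibbsMu c hc β x := by
    intro α hα
    rcases lt_trichotomy α β with hlt | heq | hgt
    · have hβne : β ≠ βmin := fun h => absurd (h ▸ hα.1) (not_le.mpr hlt)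
      have hμ := h₁.resolve_left hβne
      refine gibbs_key c hc hnonneg hne β α x τ hτ0 {y | y < x} ?_ hμ
      intro y hy
      have : α - β < 0 := by linarith
      nlinarith [Set.mem_setOf_eq ▸ hy]
    · subst heq
      have hmu : 0 ≤ gibbsMu c hc α x :=
        div_nonneg (mul_nonneg (hnonneg x) (Real.exp_pos _).le) (hZ α).le
      nlinarith
    · have hβne : β ≠ βmax := fun h => absurd (h ▸ hα.2) (not_le.mpr hgt)
      have hμ := h₂.resolve_left hβne
      refine gibbs_key c hc hnonneg hne β α x τ hτ0 {y | x ≤ y} ?_ hμ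
      intro y hy
      have hxy : x ≤ y := hy
      have : 0 ≤ α - β := by linarith
      nlinarith
  refine ⟨part1, ?_⟩
  have hne' : ((fun α => gibbsMu c hc α x) '' Set.Icc βmin βmax).Nonempty :=
    ⟨gibbsMu c hc β x, ⟨β, hβ, rfl⟩⟩
  have hub : ∀ a ∈ (fun α => gibbsMu c hc α x) '' Set.Icc βmin βmax,
      a ≤ gibbsMu c hc β x / τ := by
    rintro a ⟨α, hα, rfl⟩
    rw [le_div_iff₀ hτ0, mul_comm]
    exact part1 α hα
  have := csSup_le hne' hub
  rw [le_div_iff₀ hτ0] at this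
  linarith
end

section
/- Let ε > 0, γ ∈ (0, 1/2), p∘ ∈ (0,1], p ∈ [0,1], and let N be a positive integer with N ≥ 3·e^{ε}·log(4/γ) / ((1−e^{−ε})²·p∘). Let X be a binomial random variable with parameters N and p, and set p̂ = X/N. Then with probability at least 1 − γ the following two bounds both hold: (i) |p̂ − p| ≤ ε·(p + p∘); and (ii) if p ≥ e^{−ε}·p∘ then e^{−ε}·p ≤ p̂ ≤ e^{ε}·p, while if p < e^{−ε}·p∘ then p̂ < p∘. -/
/-!
The conclusion can fail only if `X / N` falls into one of three tails: below `p - b`, above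
`p + a`, or above `p + ε (p + p₀)`, where `(a, b) = ((e^ε - 1) p, (1 - e^{-ε}) p)` if
`p ≥ e^{-ε} p₀` and `(a, b) = (p₀ - p, ε (p + p₀))` otherwise. Chernoff's method gives the
Bernstein-type tail bounds `exp (-N a² / (2p + a))` above and `exp (-N b² / (2p))` below, and the
sample-size hypothesis makes each of the three at most `exp (-log (4 / γ)) = γ / 4`.
-/

set_option linter.deprecated false

open Finset Real
open scoped ENNReal

noncomputable def binomialWeight (N : ℕ) (p : ℝ) (k : ℕ) : ℝ :=
  N.choose k * p ^ k * (1 - p) ^ (N - k)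

section BinomialWeight

variable {N : ℕ} {p : ℝ}

lemma binomialWeight_nonneg (hp0 : 0 ≤ p) (hp1 : p ≤ 1) (k : ℕ) : 0 ≤ binomialWeight N p k := by
  have : 0 ≤ 1 - p := sub_nonneg.2 hp1
  unfold binomialWeight
  positivity

lemma sum_binomialWeight_mul_pow (N : ℕ) (p x : ℝ) :
    ∑ k ∈ range (N + 1), binomialWeight N p k * x ^ k = (p * x + (1 - p)) ^ N := by
  rw [add_pow]
  refine sum_congr rfl fun k _ => ?_
  unfold binomialWeight
  ring

/-- Chernoff's bound: Markov's inequality for `exp (s X)`. -/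
lemma sum_filter_binomialWeight_le_exp (hp0 : 0 ≤ p) (hp1 : p ≤ 1) (Q : ℕ → Prop)
    [DecidablePred Q] (s c : ℝ) (hQ : ∀ k, Q k → s * c ≤ s * k) :
    ∑ k ∈ (range (N + 1)).filter Q, binomialWeight N p k
      ≤ exp (N * p * (exp s - 1) - s * c) := by
  have hw := binomialWeight_nonneg (N := N) hp0 hp1
  calc ∑ k ∈ (range (N + 1)).filter Q, binomialWeight N p k
      ≤ ∑ k ∈ (range (N + 1)).filter Q, binomialWeight N p k * exp (s * k - s * c) :=
        sum_le_sum fun k hk => le_mul_of_one_le_right (hw k)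
          (one_le_exp (sub_nonneg.2 (hQ k (mem_filter.1 hk).2)))
    _ ≤ ∑ k ∈ range (N + 1), binomialWeight N p k * exp (s * k - s * c) :=
        sum_le_sum_of_subset_of_nonneg (filter_subset _ _)
          fun k _ _ => mul_nonneg (hw k) (exp_nonneg _)
    _ = (p * exp s + (1 - p)) ^ N * exp (-(s * c)) := by
        rw [← sum_binomialWeight_mul_pow, sum_mul]
        refine sum_congr rfl fun k _ => ?_
        rw [sub_eq_add_neg, exp_add, ← exp_nat_mul, mul_comm s, mul_assoc]
    _ ≤ exp (p * (exp s - 1)) ^ N * exp (-(s * c)) := by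
        have h := add_one_le_exp (p * (exp s - 1))
        gcongr
        nlinarith
    _ = exp (N * p * (exp s - 1) - s * c) := by
        rw [← exp_nat_mul, ← exp_add]
        ring_nf

lemma sum_filter_binomialWeight_upper_le (hp0 : 0 ≤ p) (hp1 : p ≤ 1) {a : ℝ} (ha : 0 < a) :
    ∑ k ∈ (range (N + 1)).filter (fun k : ℕ => N * (p + a) ≤ k), binomialWeight N p k
      ≤ exp (-(N * a ^ 2 / (2 * p + a))) := by
  rcases hp0.eq_or_lt with rfl | hp
  · refine (sum_filter_binomialWeight_le_exp le_rfl hp1 _ 1 (N * (0 + a))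
      fun k hk => by linarith).trans (le_of_eq ?_)
    congr 1
    field_simp
    ring
  · have hs : exp (log (1 + a / p)) = 1 + a / p := exp_log (by positivity)
    refine (sum_filter_binomialWeight_le_exp hp0 hp1 _ (log (1 + a / p)) _
      fun k hk => mul_le_mul_of_nonneg_left hk
        (log_nonneg (le_add_of_nonneg_right (by positivity)))).trans ?_
    rw [hs, exp_le_exp]
    -- `log (1 + u) ≥ 2 u / (u + 2)` turns the optimal Chernoff exponent into Bernstein's.
    have hlog : 2 * a / (a + 2 * p) ≤ log (1 + a / p) := by
      convert le_log_one_add_of_nonneg (by positivity : 0 ≤ a / p) using 1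
      field_simp
    have hbound : N * ((p + a) * (2 * a / (a + 2 * p))) ≤ N * ((p + a) * log (1 + a / p)) := by
      gcongr
    have hlin : (N : ℝ) * p * (1 + a / p - 1) = N * a := by rw [add_sub_cancel_left]; field_simp
    have hbern : (N : ℝ) * ((p + a) * (2 * a / (a + 2 * p))) = N * a + N * a ^ 2 / (2 * p + a) := by
      field_simp
      ring
    rw [hlin]
    nlinarith

lemma exp_neg_le_one_sub_add_sq_div_two {t : ℝ} (ht : 0 ≤ t) : exp (-t) ≤ 1 - t + t ^ 2 / 2 := by
  have h := quadratic_le_exp_of_nonneg ht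
  rw [exp_neg, inv_le_comm₀ (exp_pos t) (by nlinarith)]
  refine le_trans ?_ h
  rw [inv_le_iff_one_le_mul₀ (by nlinarith)]
  nlinarith [sq_nonneg (t ^ 2)]

lemma sum_filter_binomialWeight_lower_le (hp0 : 0 < p) (hp1 : p ≤ 1) {b : ℝ} (hb : 0 ≤ b) :
    ∑ k ∈ (range (N + 1)).filter (fun k : ℕ => k ≤ N * (p - b)), binomialWeight N p k
      ≤ exp (-(N * b ^ 2 / (2 * p))) := by
  have ht : 0 ≤ b / p := by positivity
  refine (sum_filter_binomialWeight_le_exp hp0.le hp1 _ (-(b / p)) _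
    fun k hk => mul_le_mul_of_nonpos_left hk (by linarith)).trans ?_
  rw [exp_le_exp]
  have hq := mul_le_mul_of_nonneg_left (exp_neg_le_one_sub_add_sq_div_two ht)
    (by positivity : (0 : ℝ) ≤ N * p)
  have e : (N : ℝ) * p * (1 - b / p + (b / p) ^ 2 / 2 - 1) - -(b / p) * (N * (p - b))
      = -(N * b ^ 2 / (2 * p)) := by
    field_simp
    ring
  linarith

end BinomialWeight

section BinomialMeasure

variable {N : ℕ} {p : ℝ}

lemma binomial_apply_eq_ofReal_binomialWeight (hp0 : 0 ≤ p) (hp1 : p ≤ 1) (i : Fin (N + 1)) :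
    PMF.binomial p.toNNReal (toNNReal_le_one.mpr hp1) N i
      = ENNReal.ofReal (binomialWeight N p i) := by
  have h1p : 0 ≤ 1 - p := sub_nonneg.2 hp1
  rw [PMF.binomial_apply, Fin.val_last, binomialWeight, ENNReal.ofReal_mul (by positivity),
    ENNReal.ofReal_mul (by positivity), ENNReal.ofReal_natCast, ENNReal.ofReal_pow hp0,
    ENNReal.ofReal_pow h1p, ENNReal.ofReal_sub _ hp0, ENNReal.ofReal_one, mul_comm, mul_assoc]
  norm_cast

lemma binomial_toMeasure_setOf (hp0 : 0 ≤ p) (hp1 : p ≤ 1) (Q : ℕ → Prop) [DecidablePred Q] :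
    (PMF.binomial p.toNNReal (toNNReal_le_one.mpr hp1) N).toMeasure {x | Q x}
      = ENNReal.ofReal (∑ k ∈ (range (N + 1)).filter Q, binomialWeight N p k) := by
  rw [PMF.toMeasure_apply_fintype, ENNReal.ofReal_sum_of_nonneg
    fun k _ => binomialWeight_nonneg hp0 hp1 k, sum_filter, ← Fin.sum_univ_eq_sum_range]
  refine sum_congr rfl fun i _ => ?_
  rw [Set.indicator_apply]
  split_ifs <;> simp_all [binomial_apply_eq_ofReal_binomialWeight hp0 hp1]

lemma binomial_measure_upper_le (hp0 : 0 ≤ p) (hp1 : p ≤ 1) (hN : 0 < N) {a L : ℝ} (ha : 0 < a)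
    (hL : L * (2 * p + a) ≤ N * a ^ 2) :
    (PMF.binomial p.toNNReal (toNNReal_le_one.mpr hp1) N).toMeasure
        {x | p + a ≤ (x : ℝ) / N} ≤ ENNReal.ofReal (exp (-L)) := by
  have hN' : (0 : ℝ) < N := Nat.cast_pos.2 hN
  simp_rw [le_div_iff₀ hN', mul_comm _ (N : ℝ)]
  rw [binomial_toMeasure_setOf hp0 hp1 (fun k : ℕ => N * (p + a) ≤ k)]
  refine ENNReal.ofReal_le_ofReal ((sum_filter_binomialWeight_upper_le hp0 hp1 ha).trans ?_)
  rw [exp_le_exp, neg_le_neg_iff, le_div_iff₀ (by positivity)]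
  exact hL

lemma binomial_measure_lower_le (hp0 : 0 ≤ p) (hp1 : p ≤ 1) (hN : 0 < N) {b L : ℝ} (hb : 0 < b)
    (hL : L * (2 * p) ≤ N * b ^ 2) :
    (PMF.binomial p.toNNReal (toNNReal_le_one.mpr hp1) N).toMeasure
        {x | (x : ℝ) / N ≤ p - b} ≤ ENNReal.ofReal (exp (-L)) := by
  have hN' : (0 : ℝ) < N := Nat.cast_pos.2 hN
  rcases le_or_gt b p with hbp | hpb
  · simp_rw [div_le_iff₀ hN', mul_comm _ (N : ℝ)]
    rw [binomial_toMeasure_setOf hp0 hp1 (fun k : ℕ => k ≤ N * (p - b))]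
    refine ENNReal.ofReal_le_ofReal
      ((sum_filter_binomialWeight_lower_le (hb.trans_le hbp) hp1 hb.le).trans ?_)
    rw [exp_le_exp, neg_le_neg_iff, le_div_iff₀ (by linarith)]
    exact hL
  · have hempty : {x : Fin (N + 1) | (x : ℝ) / N ≤ p - b} = ∅ :=
      Set.eq_empty_of_forall_notMem fun x (hx : (x : ℝ) / N ≤ p - b) =>
        hx.not_gt (by linarith [(by positivity : 0 ≤ (x : ℝ) / N)])
    simp [hempty]

end BinomialMeasure

open MeasureTheory in
lemma ofReal_one_sub_le_binomial_measure {N : ℕ} {p : ℝ} (hp0 : 0 ≤ p) (hp1 : p ≤ 1)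
    (hN : 0 < N) (P : ℝ → Prop) {a a' b L : ℝ} (ha : 0 < a) (ha' : 0 < a') (hb : 0 < b)
    (hLa : L * (2 * p + a) ≤ N * a ^ 2) (hLa' : L * (2 * p + a') ≤ N * a' ^ 2)
    (hLb : L * (2 * p) ≤ N * b ^ 2) (hP : ∀ q, p - b < q → q < p + a → q < p + a' → P q) :
    ENNReal.ofReal (1 - 3 * exp (-L))
      ≤ (PMF.binomial p.toNNReal (toNNReal_le_one.mpr hp1) N).toMeasure {x | P ((x : ℝ) / N)} := by
  set μ := (PMF.binomial p.toNNReal (toNNReal_le_one.mpr hp1) N).toMeasure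
  set e := ENNReal.ofReal (exp (-L))
  have hcover : (Set.univ : Set (Fin (N + 1))) ⊆ {x | P ((x : ℝ) / N)} ∪ ({x | (x : ℝ) / N ≤ p - b}
      ∪ {x | p + a ≤ (x : ℝ) / N} ∪ {x | p + a' ≤ (x : ℝ) / N}) := by
    intro x _
    by_contra h
    simp only [Set.mem_union, Set.mem_setOf_eq, not_or, not_le] at h
    exact h.1 (hP _ h.2.1.1 h.2.1.2 h.2.2)
  have hunion : 1 ≤ μ {x | P ((x : ℝ) / N)} + ENNReal.ofReal (3 * exp (-L)) := calc
    1 = μ Set.univ := measure_univ.symm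
    _ ≤ μ {x | P ((x : ℝ) / N)} + (μ {x | (x : ℝ) / N ≤ p - b} + μ {x | p + a ≤ (x : ℝ) / N}
          + μ {x | p + a' ≤ (x : ℝ) / N}) :=
        (measure_mono hcover).trans <| (measure_union_le _ _).trans <| by
          gcongr
          exact (measure_union_le _ _).trans (by gcongr; exact measure_union_le _ _)
    _ ≤ μ {x | P ((x : ℝ) / N)} + (e + e + e) := by
        gcongr
        · exact binomial_measure_lower_le hp0 hp1 hN hb hLb
        · exact binomial_measure_upper_le hp0 hp1 hN ha hLa
        · exact binomial_measure_upper_le hp0 hp1 hN ha' hLa'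
    _ = μ {x | P ((x : ℝ) / N)} + ENNReal.ofReal (3 * exp (-L)) := by
        rw [ENNReal.ofReal_mul zero_le_three, ENNReal.ofReal_ofNat]
        ring
  rw [ENNReal.ofReal_sub _ (by positivity), ENNReal.ofReal_one]
  exact tsub_le_iff_right.2 hunion

def IsAccurateEstimate (ε p₀ p q : ℝ) : Prop :=
  |q - p| ≤ ε * (p + p₀)
    ∧ (exp (-ε) * p₀ ≤ p → exp (-ε) * p ≤ q ∧ q ≤ exp ε * p)
    ∧ (p < exp (-ε) * p₀ → q < p₀)

section SampleSize

variable {ε p₀ p L n : ℝ}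

lemma one_sub_exp_neg_pos (hε : 0 < ε) : 0 < 1 - exp (-ε) :=
  sub_pos.2 (exp_lt_one_iff.2 (neg_neg_of_pos hε))

lemma three_mul_exp_mul_le_sq_of_sampleSize (hε : 0 < ε) (hp₀ : 0 < p₀) (hp : 0 ≤ p)
    (hn0 : 0 ≤ n) (hn : 3 * exp ε * L ≤ n * ((1 - exp (-ε)) ^ 2 * p₀)) :
    3 * exp ε * L * (p + p₀) ≤ n * (ε * (p + p₀)) ^ 2 := by
  have hδ : (1 - exp (-ε)) ^ 2 ≤ ε ^ 2 :=
    pow_le_pow_left₀ (one_sub_exp_neg_pos hε).le (by linarith [add_one_le_exp (-ε)]) 2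
  calc 3 * exp ε * L * (p + p₀) ≤ n * ((1 - exp (-ε)) ^ 2 * p₀) * (p + p₀) := by gcongr
    _ ≤ n * (ε ^ 2 * (p + p₀)) * (p + p₀) := by gcongr; linarith
    _ = n * (ε * (p + p₀)) ^ 2 := by ring

lemma upper_tail_condition_of_sampleSize (hε : 0 < ε) (hp₀ : 0 < p₀) (hp : 0 ≤ p) (hL : 0 ≤ L)
    (hn0 : 0 ≤ n) (hn : 3 * exp ε * L ≤ n * ((1 - exp (-ε)) ^ 2 * p₀)) :
    L * (2 * p + ε * (p + p₀)) ≤ n * (ε * (p + p₀)) ^ 2 := by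
  have hε3 : 2 + ε ≤ 3 * exp ε := by linarith [add_one_le_exp ε]
  calc L * (2 * p + ε * (p + p₀)) ≤ (2 + ε) * (L * (p + p₀)) := by nlinarith [mul_nonneg hL hp₀.le]
    _ ≤ 3 * exp ε * (L * (p + p₀)) := by gcongr
    _ = 3 * exp ε * L * (p + p₀) := by ring
    _ ≤ n * (ε * (p + p₀)) ^ 2 := three_mul_exp_mul_le_sq_of_sampleSize hε hp₀ hp hn0 hn

lemma exists_tails_of_le (hε : 0 < ε) (hp₀ : 0 < p₀) (hL : 0 ≤ L) (hn0 : 0 ≤ n)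
    (hn : 3 * exp ε * L ≤ n * ((1 - exp (-ε)) ^ 2 * p₀)) (hcase : exp (-ε) * p₀ ≤ p) :
    ∃ a b, 0 < a ∧ 0 < b ∧ L * (2 * p + a) ≤ n * a ^ 2 ∧ L * (2 * p) ≤ n * b ^ 2 ∧
      ∀ q, p - b < q → q < p + a → q < p + ε * (p + p₀) → IsAccurateEstimate ε p₀ p q := by
  set δ := 1 - exp (-ε)
  have hδ : 0 < δ := one_sub_exp_neg_pos hε
  have hδε : δ ≤ ε := by linarith [add_one_le_exp (-ε)]
  have hE : 1 < exp ε := one_lt_exp_iff.2 hε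
  have hEδ : exp ε * δ = exp ε - 1 := by
    rw [mul_sub, mul_one, ← exp_add, add_neg_cancel, exp_zero]
  have hp : 0 < p := lt_of_lt_of_le (by positivity) hcase
  have hnp : 3 * L ≤ n * δ ^ 2 * p := by
    have h := mul_le_mul_of_nonneg_left hn (exp_pos (-ε)).le
    have e : exp (-ε) * (3 * exp ε * L) = 3 * L := by
      rw [show exp (-ε) * (3 * exp ε * L) = 3 * (exp (-ε) * exp ε) * L by ring, ← exp_add,
        neg_add_cancel, exp_zero, mul_one]
    calc 3 * L ≤ n * δ ^ 2 * (exp (-ε) * p₀) := by linarith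
      _ ≤ n * δ ^ 2 * p := by gcongr
  refine ⟨(exp ε - 1) * p, δ * p, by nlinarith, by positivity, ?_, ?_, ?_⟩
  · have hE3 : 1 + exp ε ≤ 3 * exp ε ^ 2 := by nlinarith
    calc L * (2 * p + (exp ε - 1) * p) = (1 + exp ε) * (L * p) := by ring
      _ ≤ 3 * exp ε ^ 2 * (L * p) := by gcongr
      _ = exp ε ^ 2 * p * (3 * L) := by ring
      _ ≤ exp ε ^ 2 * p * (n * δ ^ 2 * p) := by gcongr
      _ = n * ((exp ε - 1) * p) ^ 2 := by rw [← hEδ]; ring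
  · nlinarith
  · intro q hlow hhigh hhigh'
    refine ⟨abs_le.2 ⟨by nlinarith, by linarith⟩, fun _ => ⟨by linarith, by linarith⟩,
      fun h => absurd hcase (not_le.2 h)⟩

lemma exists_tails_of_lt (hε : 0 < ε) (hp₀ : 0 < p₀) (hp : 0 ≤ p) (hL : 0 ≤ L) (hn0 : 0 ≤ n)
    (hn : 3 * exp ε * L ≤ n * ((1 - exp (-ε)) ^ 2 * p₀)) (hcase : p < exp (-ε) * p₀) :
    ∃ a b, 0 < a ∧ 0 < b ∧ L * (2 * p + a) ≤ n * a ^ 2 ∧ L * (2 * p) ≤ n * b ^ 2 ∧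
      ∀ q, p - b < q → q < p + a → q < p + ε * (p + p₀) → IsAccurateEstimate ε p₀ p q := by
  have hE : 1 < exp ε := one_lt_exp_iff.2 hε
  have hgap : (1 - exp (-ε)) * p₀ < p₀ - p := by linarith
  have hpp₀ : p < p₀ := by nlinarith [exp_lt_one_iff.2 (neg_neg_of_pos hε)]
  refine ⟨p₀ - p, ε * (p + p₀), by linarith, by positivity, ?_, ?_, ?_⟩
  · calc L * (2 * p + (p₀ - p)) ≤ 3 * exp ε * L * p₀ := by nlinarith [mul_nonneg hL hp₀.le]
      _ ≤ n * ((1 - exp (-ε)) ^ 2 * p₀) * p₀ := by gcongr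
      _ = n * ((1 - exp (-ε)) * p₀) ^ 2 := by ring
      _ ≤ n * (p₀ - p) ^ 2 := by gcongr; exact mul_nonneg (one_sub_exp_neg_pos hε).le hp₀.le
  · calc L * (2 * p) ≤ 3 * exp ε * L * (p + p₀) := by
          nlinarith [mul_nonneg hL hp₀.le, mul_nonneg hL hp]
      _ ≤ n * (ε * (p + p₀)) ^ 2 := three_mul_exp_mul_le_sq_of_sampleSize hε hp₀ hp hn0 hn
  · intro q hlow hhigh hhigh'
    refine ⟨abs_le.2 ⟨by linarith, by linarith⟩, fun h => absurd hcase (not_lt.2 h),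
      fun _ => by linarith⟩

end SampleSize

/-- Let `ε > 0`, `γ ∈ (0, 1/2)`, `p∘ ∈ (0,1]`, `p ∈ [0,1]`, and let `N` be a
positive integer with `N ≥ 3·e^ε·log(4/γ) / ((1−e^{−ε})²·p∘)`.  If `X` is a
binomial random variable with parameters `N` and `p`, and `p̂ = X/N`, then with
probability at least `1 − γ`: (i) `|p̂ − p| ≤ ε·(p + p∘)`; and (ii) if
`p ≥ e^{−ε}·p∘` then `e^{−ε}·p ≤ p̂ ≤ e^{ε}·p`, while if `p < e^{−ε}·p∘` then
`p̂ < p∘`. -/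
theorem stmt_5 (ε γ p₀ p : ℝ) (hε : 0 < ε) (hγ : γ ∈ Set.Ioo (0 : ℝ) (1 / 2))
    (hp₀ : p₀ ∈ Set.Ioc (0 : ℝ) 1) (hp : p ∈ Set.Icc (0 : ℝ) 1)
    (N : ℕ) (hN : 0 < N)
    (hNbig : 3 * Real.exp ε * Real.log (4 / γ) / ((1 - Real.exp (-ε)) ^ 2 * p₀) ≤ (N : ℝ)) :
    ENNReal.ofReal (1 - γ) ≤
      (PMF.binomial (Real.toNNReal p) (Real.toNNReal_le_one.mpr hp.2) N).toMeasure
        {X : Fin (N + 1) |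
          |(X : ℝ) / N - p| ≤ ε * (p + p₀)
          ∧ (Real.exp (-ε) * p₀ ≤ p →
              Real.exp (-ε) * p ≤ (X : ℝ) / N ∧ (X : ℝ) / N ≤ Real.exp ε * p)
          ∧ (p < Real.exp (-ε) * p₀ → (X : ℝ) / N < p₀)} := by
  obtain ⟨hγ0, hγ1⟩ := hγ
  set L := log (4 / γ)
  have hL : 0 ≤ L := log_nonneg (by rw [le_div_iff₀ hγ0]; linarith)
  have hγL : 1 - γ ≤ 1 - 3 * exp (-L) := by
    rw [exp_neg, exp_log (by positivity), inv_div]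
    linarith
  have hn : 3 * exp ε * L ≤ N * ((1 - exp (-ε)) ^ 2 * p₀) := by
    rwa [div_le_iff₀ (mul_pos (pow_pos (one_sub_exp_neg_pos hε) 2) hp₀.1)] at hNbig
  obtain ⟨a, b, ha, hb, hLa, hLb, hacc⟩ := (le_or_gt (exp (-ε) * p₀) p).elim
    (exists_tails_of_le hε hp₀.1 hL N.cast_nonneg hn)
    (exists_tails_of_lt hε hp₀.1 hp.1 hL N.cast_nonneg hn)
  exact (ENNReal.ofReal_le_ofReal hγL).trans <| ofReal_one_sub_le_binomial_measure hp.1 hp.2 hN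
    (IsAccurateEstimate ε p₀ p) ha (mul_pos hε (add_pos_of_nonneg_of_pos hp.1 hp₀.1)) hb hLa
    (upper_tail_condition_of_sampleSize hε hp₀.1 hp.1 hL N.cast_nonneg hn) hLb hacc
end

section
/- Let βmin ≤ βmax, let δ, ε ∈ (0,1), and let x be a point of the support of c (so c(x) > 0). Suppose α ∈ [βmin, βmax] and reals Q̂ > 0, μ̂ ≥ 0, ν ≥ 0 satisfy: (A1) |log Q̂ − log Q(α)| ≤ 0.1·ε; (A2) μ_α(x) ≥ ν·min(Δ(x), 2δ); (A3) |μ̂ − μ_α(x)| ≤ 0.1·ε·(μ_α(x) + νδ). Define π̂ = Q̂·e^{(βmin−α)x}·μ̂ and u = 0.5·Q̂·e^{(βmin−α)x}·ε·(δν + μ̂). Then |π̂ − π(x)| ≤ u ≤ ε·π(x)·(1 + δ/Δ(x)). -/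
/-- `Δ(x) = max_{β∈[βmin,βmax]} μ_β(x)`. -/
noncomputable def gibbsDelta (c : ℝ → ℝ) (hc : (Function.support c).Finite)
    (βmin βmax x : ℝ) : ℝ :=
  sSup ((fun β => gibbsMu c hc β x) '' Set.Icc βmin βmax)

set_option maxHeartbeats 1000000 in
/-- Correctness of the `EstimatePi` estimator: under (A1)–(A3), the estimates
`π̂ = Q̂·e^{(βmin−α)x}·μ̂` and `u = 0.5·Q̂·e^{(βmin−α)x}·ε·(δν + μ̂)` satisfy
`|π̂ − π(x)| ≤ u ≤ ε·π(x)·(1 + δ/Δ(x))`, where `π(x) = μ_{βmin}(x)` and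
`Q(α) = Z(α)/Z(βmin)`. -/
theorem stmt_6 (n : ℝ) (hn : 1 ≤ n) (c : ℝ → ℝ) (hc : (Function.support c).Finite)
    (hsupp : Function.support c ⊆ {0} ∪ Set.Icc 1 n)
    (hnonneg : ∀ x, 0 ≤ c x) (hne : c ≠ 0)
    (βmin βmax : ℝ) (hββ : βmin ≤ βmax)
    (δ ε : ℝ) (hδ : δ ∈ Set.Ioo (0 : ℝ) 1) (hε : ε ∈ Set.Ioo (0 : ℝ) 1)
    (x : ℝ) (hx : 0 < c x)
    (α : ℝ) (hα : α ∈ Set.Icc βmin βmax)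
    (Qhat μhat ν : ℝ) (hQhat : 0 < Qhat) (hμhat : 0 ≤ μhat) (hν : 0 ≤ ν)
    (hA1 : |Real.log Qhat - Real.log (gibbsZ c hc α / gibbsZ c hc βmin)| ≤ 0.1 * ε)
    (hA2 : ν * min (gibbsDelta c hc βmin βmax x) (2 * δ) ≤ gibbsMu c hc α x)
    (hA3 : |μhat - gibbsMu c hc α x| ≤ 0.1 * ε * (gibbsMu c hc α x + ν * δ)) :
    |Qhat * Real.exp ((βmin - α) * x) * μhat - gibbsMu c hc βmin x| ≤
        0.5 * Qhat * Real.exp ((βmin - α) * x) * ε * (δ * ν + μhat)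
    ∧ 0.5 * Qhat * Real.exp ((βmin - α) * x) * ε * (δ * ν + μhat) ≤
        ε * gibbsMu c hc βmin x * (1 + δ / gibbsDelta c hc βmin βmax x) := by
  have hxmem : x ∈ hc.toFinset := by
    simp only [Set.Finite.mem_toFinset, Function.mem_support]
    exact hx.ne'
  have hZpos : ∀ β, 0 < gibbsZ c hc β := by
    intro β
    apply Finset.sum_pos'
    · intro i _; exact mul_nonneg (hnonneg i) (Real.exp_pos _).le
    · exact ⟨x, hxmem, mul_pos hx (Real.exp_pos _)⟩
  have hZa : 0 < gibbsZ c hc α := hZpos α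
  have hZb : 0 < gibbsZ c hc βmin := hZpos βmin
  have hμle1 : ∀ β, gibbsMu c hc β x ≤ 1 := by
    intro β
    unfold gibbsMu
    rw [div_le_one (hZpos β)]
    exact Finset.single_le_sum (f := fun i => c i * Real.exp (β * i))
      (fun i _ => mul_nonneg (hnonneg i) (Real.exp_pos _).le) hxmem
  have hμpos : ∀ β, 0 < gibbsMu c hc β x :=
    fun β => div_pos (mul_pos hx (Real.exp_pos _)) (hZpos β)
  set μ := gibbsMu c hc α x with hμdef
  set p := gibbsMu c hc βmin x with hpdef
  set Δ := gibbsDelta c hc βmin βmax x with hΔdef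
  set E := Real.exp ((βmin - α) * x) with hEdef
  set Q := gibbsZ c hc α / gibbsZ c hc βmin with hQdef
  have hE : 0 < E := Real.exp_pos _
  have hQ : 0 < Q := div_pos hZa hZb
  have hμ : 0 < μ := hμpos α
  have hppos : 0 < p := hμpos βmin
  have hΔge : μ ≤ Δ := by
    apply le_csSup
    · exact ⟨1, by rintro y ⟨β, -, rfl⟩; exact hμle1 β⟩
    · exact ⟨α, hα, rfl⟩
  have hΔpos : 0 < Δ := lt_of_lt_of_le hμ hΔge
  -- key identity
  have he : E * Real.exp (α * x) = Real.exp (βmin * x) := by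
    rw [← Real.exp_add]; ring_nf
  have hp : p = Q * E * μ := by
    rw [hpdef, hμdef, hQdef, gibbsMu, gibbsMu, ← he]
    field_simp
  -- Qhat bounds
  have hεpos := hε.1
  have hεle := hε.2.le
  have hexp : Real.exp (0.1 * ε) ≤ 1 + ε / 9 := by
    have h1 : (1:ℝ) - 0.1 * ε ≤ Real.exp (-(0.1 * ε)) := by
      linarith [Real.add_one_le_exp (-(0.1 * ε))]
    have h2 : Real.exp (0.1 * ε) * Real.exp (-(0.1 * ε)) = 1 := by
      rw [← Real.exp_add]; simp
    have h3 : (0:ℝ) < 1 - 0.1 * ε := by nlinarith [hε.1, hε.2]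
    have h4 : Real.exp (0.1 * ε) * (1 - 0.1 * ε) ≤ 1 := by
      calc Real.exp (0.1 * ε) * (1 - 0.1 * ε)
          ≤ Real.exp (0.1 * ε) * Real.exp (-(0.1 * ε)) :=
            mul_le_mul_of_nonneg_left h1 (Real.exp_pos _).le
        _ = 1 := h2
    nlinarith [h4, h3, hε.1, hε.2]
  have habs := abs_le.mp hA1
  have key : ∀ a b : ℝ, 0 < a → 0 < b → Real.log a - Real.log b ≤ 0.1 * ε →
      a ≤ b * (1 + ε / 9) := by
    intro a b ha hb h
    have h' := Real.exp_le_exp.mpr (show Real.log a ≤ Real.log b + 0.1 * ε by linarith)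
    rw [Real.exp_add, Real.exp_log ha, Real.exp_log hb] at h'
    have := mul_le_mul_of_nonneg_left hexp hb.le
    linarith
  have hQ1 : Q ≤ Qhat * (1 + ε / 9) := key Q Qhat hQ hQhat (by linarith [habs.1])
  have hQ2 : Qhat ≤ Q * (1 + ε / 9) := key Qhat Q hQhat hQ habs.2
  have hQ3 : Qhat * (1 - 0.1 * ε) ≤ Q := by
    have h' := Real.exp_le_exp.mpr
      (show Real.log Qhat + (-(0.1 * ε)) ≤ Real.log Q by linarith [habs.2])
    rw [Real.exp_add, Real.exp_log hQhat, Real.exp_log hQ] at h'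
    have h2 : 1 - 0.1 * ε ≤ Real.exp (-(0.1 * ε)) := by
      linarith [Real.add_one_le_exp (-(0.1 * ε))]
    have h3 : Qhat * (1 - 0.1 * ε) ≤ Qhat * Real.exp (-(0.1 * ε)) :=
      mul_le_mul_of_nonneg_left h2 hQhat.le
    linarith
  clear_value μ p Δ E Q
  -- μhat bounds
  have hA3' := abs_le.mp hA3
  have hm0 : (0:ℝ) ≤ μ + ν * δ := add_nonneg hμ.le (mul_nonneg hν hδ.1.le)
  have hεm : 0.1 * ε * (μ + ν * δ) ≤ 0.1 * (μ + ν * δ) := by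
    have h9 := mul_nonneg (by linarith only [hε.2] : (0:ℝ) ≤ 1 - ε) hm0
    nlinarith only [h9]
  have hμhat1 : μ - 0.1 * ε * (μ + ν * δ) ≤ μhat := by linarith only [hA3'.1]
  -- A2 consequence
  have hd0 : (0:ℝ) ≤ δ / Δ := div_nonneg hδ.1.le hΔpos.le
  have hνδ : ν * δ ≤ μ * (δ / Δ) + μ / 2 := by
    rcases le_total Δ (2 * δ) with h | h
    · rw [min_eq_left h] at hA2
      have h2 := mul_le_mul_of_nonneg_right hA2 hδ.1.le
      have h3 : ν * δ ≤ μ * δ / Δ := by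
        rw [le_div_iff₀ hΔpos]; linarith only [h2]
      have h4 : μ * δ / Δ = μ * (δ / Δ) := by ring
      linarith only [h3, h4, hμ.le]
    · rw [min_eq_right h] at hA2
      linarith only [hA2, mul_nonneg hμ.le hd0]
  -- first inequality, scalar part
  have s1 : 0.1 * (μ + ν * δ) + 0.1 * μ ≤ 0.5 * (ν * δ) + 0.5 * μhat := by
    linarith only [hμhat1, hεm, hμ.le, mul_nonneg hν hδ.1.le]
  have s2 : 0.1 * (μ + ν * δ) + μ / 9 ≤ 0.5 * (ν * δ) + 0.5 * μhat := by
    linarith only [hμhat1, hεm, hμ.le, mul_nonneg hν hδ.1.le]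
  have u1 : Qhat * (μhat - μ) ≤ Qhat * (0.1 * ε * (μ + ν * δ)) :=
    mul_le_mul_of_nonneg_left hA3'.2 hQhat.le
  have u1' : Qhat * (μ - μhat) ≤ Qhat * (0.1 * ε * (μ + ν * δ)) :=
    mul_le_mul_of_nonneg_left (by linarith only [hA3'.1]) hQhat.le
  have u2 : (Qhat - Q) * μ ≤ (0.1 * ε * Qhat) * μ :=
    mul_le_mul_of_nonneg_right (by linarith only [hQ3]) hμ.le
  have u2' : (Q - Qhat) * μ ≤ (ε / 9 * Qhat) * μ :=
    mul_le_mul_of_nonneg_right (by linarith only [hQ1]) hμ.le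
  have hQε : (0:ℝ) ≤ Qhat * ε := mul_nonneg hQhat.le hε.1.le
  have u3 : Qhat * ε * (0.1 * (μ + ν * δ) + 0.1 * μ) ≤
      Qhat * ε * (0.5 * (ν * δ) + 0.5 * μhat) :=
    mul_le_mul_of_nonneg_left s1 hQε
  have u3' : Qhat * ε * (0.1 * (μ + ν * δ) + μ / 9) ≤
      Qhat * ε * (0.5 * (ν * δ) + 0.5 * μhat) :=
    mul_le_mul_of_nonneg_left s2 hQε
  have key1 : |Qhat * μhat - Q * μ| ≤ 0.5 * Qhat * ε * (δ * ν + μhat) := by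
    rw [abs_le]
    constructor
    · linarith only [u1', u2', u3']
    · linarith only [u1, u2, u3]
  constructor
  · have heq : Qhat * E * μhat - p = E * (Qhat * μhat - Q * μ) := by
      rw [hp]; ring
    rw [heq, abs_mul, abs_of_pos hE]
    calc E * |Qhat * μhat - Q * μ| ≤ E * (0.5 * Qhat * ε * (δ * ν + μhat)) :=
          mul_le_mul_of_nonneg_left key1 hE.le
      _ = 0.5 * Qhat * E * ε * (δ * ν + μhat) := by ring
  · have hQ2' : Qhat ≤ (10 / 9) * Q := by
      linarith only [hQ2, mul_nonneg (by linarith only [hε.2] : (0:ℝ) ≤ 1 - ε) hQ.le]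
    have hμhat2' : μhat ≤ 1.1 * μ + 0.1 * (ν * δ) := by linarith only [hA3'.2, hεm]
    have hs : δ * ν + μhat ≤ 1.1 * (μ * (δ / Δ)) + 1.65 * μ := by
      linarith only [hνδ, hμhat2']
    have hrhs0 : (0:ℝ) ≤ 1.1 * (μ * (δ / Δ)) + 1.65 * μ := by
      linarith only [mul_nonneg hμ.le hd0, hμ.le]
    have t1 : 0.5 * Qhat * (δ * ν + μhat) ≤ 0.5 * Qhat * (1.1 * (μ * (δ / Δ)) + 1.65 * μ) :=
      mul_le_mul_of_nonneg_left hs (by linarith only [hQhat.le] : (0:ℝ) ≤ 0.5 * Qhat)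
    have t2 : Qhat * (1.1 * (μ * (δ / Δ)) + 1.65 * μ) ≤
        (10 / 9) * Q * (1.1 * (μ * (δ / Δ)) + 1.65 * μ) :=
      mul_le_mul_of_nonneg_right hQ2' hrhs0
    have core : 0.5 * Qhat * (δ * ν + μhat) ≤ Q * μ * (1 + δ / Δ) := by
      linarith only [t1, t2, mul_nonneg (mul_nonneg hQ.le hμ.le) hd0, (mul_pos hQ hμ).le]
    calc 0.5 * Qhat * E * ε * (δ * ν + μhat)
        = (ε * E) * (0.5 * Qhat * (δ * ν + μhat)) := by ring
      _ ≤ (ε * E) * (Q * μ * (1 + δ / Δ)) :=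
          mul_le_mul_of_nonneg_left core (mul_nonneg hε.1.le hE.le)
      _ = ε * (Q * E * μ) * (1 + δ / Δ) := by ring
      _ = ε * p * (1 + δ / Δ) := by rw [hp]
end

section
/- Let χ ∈ ℝ and suppose Σ_{x<χ} c(x) > 0 and Σ_{x≥χ} c(x) > 0 (sums over the support of c). Then the function p(β) = μ_β({x : x ≥ χ}) is strictly increasing on ℝ. -/
/-- Let `χ ∈ ℝ` and suppose `Σ_{x<χ} c(x) > 0` and `Σ_{x≥χ} c(x) > 0`.  Then
`p(β) = μ_β({x : x ≥ χ})` is strictly increasing on `ℝ`. -/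
theorem stmt_9 (n : ℝ) (hn : 1 ≤ n) (c : ℝ → ℝ) (hc : (Function.support c).Finite)
    (hsupp : Function.support c ⊆ {0} ∪ Set.Icc 1 n)
    (hnonneg : ∀ x, 0 ≤ c x) (hne : c ≠ 0)
    (χ : ℝ)
    (hbelow : 0 < ∑ x ∈ hc.toFinset, Set.indicator {y | y < χ} c x)
    (habove : 0 < ∑ x ∈ hc.toFinset, Set.indicator {y | χ ≤ y} c x) :
    StrictMono (fun β => gibbsMuSet c hc β {x | χ ≤ x}) := by
  classical
  set F := hc.toFinset with hF
  set Fa := F.filter (fun x => χ ≤ x) with hFa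
  set Fb := F.filter (fun x => ¬ χ ≤ x) with hFb
  set A : ℝ → ℝ := fun β => ∑ x ∈ Fa, c x * Real.exp (β * x) with hA
  set B : ℝ → ℝ := fun β => ∑ x ∈ Fb, c x * Real.exp (β * x) with hB
  -- find a point below χ with positive weight
  obtain ⟨x₀, hx₀F, hx₀⟩ : ∃ x ∈ F, 0 < Set.indicator {y | y < χ} c x := by
    by_contra h; push_neg at h
    have : ∑ x ∈ F, Set.indicator {y | y < χ} c x ≤ 0 := Finset.sum_nonpos h
    linarith
  have hx₀lt : x₀ < χ := by
    by_contra h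
    simp only [Set.indicator_apply, Set.mem_setOf_eq, if_neg h] at hx₀
    linarith
  have hcx₀ : 0 < c x₀ := by
    simpa only [Set.indicator_apply, Set.mem_setOf_eq, if_pos hx₀lt] using hx₀
  -- find a point at or above χ with positive weight
  obtain ⟨y₀, hy₀F, hy₀⟩ : ∃ y ∈ F, 0 < Set.indicator {y | χ ≤ y} c y := by
    by_contra h; push_neg at h
    have : ∑ x ∈ F, Set.indicator {y | χ ≤ y} c x ≤ 0 := Finset.sum_nonpos h
    linarith
  have hy₀ge : χ ≤ y₀ := by
    by_contra h
    simp only [Set.indicator_apply, Set.mem_setOf_eq, if_neg h] at hy₀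
    linarith
  have hcy₀ : 0 < c y₀ := by
    simpa only [Set.indicator_apply, Set.mem_setOf_eq, if_pos hy₀ge] using hy₀
  have hx₀Fb : x₀ ∈ Fb := Finset.mem_filter.2 ⟨hx₀F, not_le.2 hx₀lt⟩
  have hy₀Fa : y₀ ∈ Fa := Finset.mem_filter.2 ⟨hy₀F, hy₀ge⟩
  have hApos : ∀ β, 0 < A β := fun β =>
    Finset.sum_pos' (fun i _ => mul_nonneg (hnonneg i) (Real.exp_pos _).le)
      ⟨y₀, hy₀Fa, mul_pos hcy₀ (Real.exp_pos _)⟩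
  have hBpos : ∀ β, 0 < B β := fun β =>
    Finset.sum_pos' (fun i _ => mul_nonneg (hnonneg i) (Real.exp_pos _).le)
      ⟨x₀, hx₀Fb, mul_pos hcx₀ (Real.exp_pos _)⟩
  have hZ : ∀ β, gibbsZ c hc β = A β + B β := by
    intro β
    rw [hA, hB]
    exact (Finset.sum_filter_add_sum_filter_not F (fun x => χ ≤ x) _).symm
  have hmu : ∀ β, gibbsMuSet c hc β {x | χ ≤ x} = A β / (A β + B β) := by
    intro β
    rw [gibbsMuSet, ← hZ β]
    unfold gibbsMu
    rw [Finset.sum_indicator_eq_sum_filter, ← Finset.sum_div]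
    rfl
  intro β₁ β₂ hβ
  simp only [hmu]
  rw [div_lt_div_iff₀ (by linarith [hApos β₁, hBpos β₁]) (by linarith [hApos β₂, hBpos β₂])]
  have key : A β₁ * B β₂ < A β₂ * B β₁ := by
    rw [hA, hB]
    simp only [Finset.sum_mul_sum]
    rw [← Finset.sum_product', ← Finset.sum_product']
    apply Finset.sum_lt_sum
    · rintro ⟨y, x⟩ hyx
      rw [Finset.mem_product] at hyx
      obtain ⟨hy, hx⟩ := hyx
      have hyge : χ ≤ y := (Finset.mem_filter.1 hy).2
      have hxlt : x < χ := not_le.1 (Finset.mem_filter.1 hx).2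
      have hexp : Real.exp (β₁ * y) * Real.exp (β₂ * x)
          ≤ Real.exp (β₂ * y) * Real.exp (β₁ * x) := by
        rw [← Real.exp_add, ← Real.exp_add]
        apply Real.exp_le_exp.2
        nlinarith
      have key := mul_le_mul_of_nonneg_left hexp (mul_nonneg (hnonneg y) (hnonneg x))
      dsimp only
      nlinarith [key]
    · refine ⟨(y₀, x₀), Finset.mem_product.2 ⟨hy₀Fa, hx₀Fb⟩, ?_⟩
      have hexp : Real.exp (β₁ * y₀) * Real.exp (β₂ * x₀)
          < Real.exp (β₂ * y₀) * Real.exp (β₁ * x₀) := by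
        rw [← Real.exp_add, ← Real.exp_add]
        apply Real.exp_lt_exp.2
        nlinarith
      have key := mul_lt_mul_of_pos_left hexp (mul_pos hcy₀ hcx₀)
      dsimp only
      nlinarith [key]
  nlinarith [hApos β₁, hApos β₂]
end

section
/- Let βmin ≤ βmax, let χ > 0, set q = log(Z(βmax)/Z(βmin)) (which is nonnegative), and let β₁ = βmax − (q + 1). If β₁ ≥ βmin, then μ_{β₁}({x : x ≥ χ}) ≤ e^{−1} ≤ 1/2. (This is the content of the bound β_right − β_crit ≤ q + 1, where β_crit is defined via the median of the tail probability.) -/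
lemma gibbsZ_mono (c : ℝ → ℝ) (hc : (Function.support c).Finite)
    (hnonneg : ∀ x, 0 ≤ c x)
    (hsuppnn : ∀ x ∈ Function.support c, (0:ℝ) ≤ x)
    {β β' : ℝ} (h : β ≤ β') : gibbsZ c hc β ≤ gibbsZ c hc β' := by
  refine Finset.sum_le_sum fun x hx => ?_
  have hxs : x ∈ Function.support c := (Set.Finite.mem_toFinset hc).mp hx
  have hx0 : (0:ℝ) ≤ x := hsuppnn x hxs
  have : Real.exp (β * x) ≤ Real.exp (β' * x) :=
    Real.exp_le_exp.mpr (mul_le_mul_of_nonneg_right h hx0)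
  exact mul_le_mul_of_nonneg_left this (hnonneg x)

/-- Let `βmin ≤ βmax`, `χ > 0`, `q = log(Z(βmax)/Z(βmin))` (which is
nonnegative) and `β₁ = βmax − (q + 1)`.  If `β₁ ≥ βmin`, then
`μ_{β₁}({x : x ≥ χ}) ≤ e^{−1} ≤ 1/2`. -/
theorem stmt_10 (n : ℝ) (hn : 1 ≤ n) (c : ℝ → ℝ) (hc : (Function.support c).Finite)
    (hsupp : Function.support c ⊆ {0} ∪ Set.Icc 1 n)
    (hnonneg : ∀ x, 0 ≤ c x) (hne : c ≠ 0)
    (βmin βmax : ℝ) (hββ : βmin ≤ βmax) (χ : ℝ) (hχ : 0 < χ)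
    (hβ₁ : βmin ≤ βmax - (Real.log (gibbsZ c hc βmax / gibbsZ c hc βmin) + 1)) :
    0 ≤ Real.log (gibbsZ c hc βmax / gibbsZ c hc βmin)
    ∧ gibbsMuSet c hc (βmax - (Real.log (gibbsZ c hc βmax / gibbsZ c hc βmin) + 1))
        {x | χ ≤ x} ≤ Real.exp (-1)
    ∧ Real.exp (-1) ≤ 1 / 2 := by
  have hsuppnn : ∀ x ∈ Function.support c, (0:ℝ) ≤ x := by
    intro x hx
    rcases hsupp hx with h | h
    · simp at h; simp [h]
    · linarith [h.1]
  have hZmin : 0 < gibbsZ c hc βmin := gibbsZ_pos c hc hnonneg hne βmin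
  have hZmax : 0 < gibbsZ c hc βmax := gibbsZ_pos c hc hnonneg hne βmax
  set q := Real.log (gibbsZ c hc βmax / gibbsZ c hc βmin) with hqdef
  have hmono := gibbsZ_mono c hc hnonneg hsuppnn hββ
  have hq0 : 0 ≤ q := Real.log_nonneg ((one_le_div hZmin).mpr hmono)
  set β₁ := βmax - (q + 1) with hβ₁def
  have hZ₁ : 0 < gibbsZ c hc β₁ := gibbsZ_pos c hc hnonneg hne β₁
  have hexpq : Real.exp q = gibbsZ c hc βmax / gibbsZ c hc βmin :=
    Real.exp_log (div_pos hZmax hZmin)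
  refine ⟨hq0, ?_, ?_⟩
  · have key : gibbsMuSet c hc β₁ {x | χ ≤ x}
        ≤ ∑ x ∈ hc.toFinset, c x * Real.exp (βmax * x) * Real.exp (-(q+1)) / gibbsZ c hc β₁ := by
      refine Finset.sum_le_sum fun x hx => ?_
      have hxs : x ∈ Function.support c := (Set.Finite.mem_toFinset hc).mp hx
      by_cases hxS : x ∈ {y : ℝ | χ ≤ y}
      · rw [Set.indicator_of_mem hxS]
        have hx1 : (1:ℝ) ≤ x := by
          rcases hsupp hxs with h | h
          · simp at h; simp at hxS; linarith
          · exact h.1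
        unfold gibbsMu
        rw [div_le_div_iff_of_pos_right hZ₁]
        have : Real.exp (β₁ * x) ≤ Real.exp (βmax * x) * Real.exp (-(q+1)) := by
          rw [← Real.exp_add, Real.exp_le_exp, hβ₁def]
          nlinarith [hq0]
        rw [mul_assoc]
        exact mul_le_mul_of_nonneg_left this (hnonneg x)
      · rw [Set.indicator_of_notMem hxS]
        exact div_nonneg (mul_nonneg (mul_nonneg (hnonneg x) (Real.exp_pos _).le) (Real.exp_pos _).le) hZ₁.le
    have sum_eq : (∑ x ∈ hc.toFinset, c x * Real.exp (βmax * x) * Real.exp (-(q+1)) / gibbsZ c hc β₁)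
        = gibbsZ c hc βmax * Real.exp (-(q+1)) / gibbsZ c hc β₁ := by
      simp only [gibbsZ, div_eq_mul_inv, ← Finset.sum_mul]
    have hZmin₁ : gibbsZ c hc βmin ≤ gibbsZ c hc β₁ :=
      gibbsZ_mono c hc hnonneg hsuppnn hβ₁
    have : gibbsZ c hc βmax * Real.exp (-(q+1)) / gibbsZ c hc β₁ ≤ Real.exp (-1) := by
      have hZmaxeq : gibbsZ c hc βmax = Real.exp q * gibbsZ c hc βmin := by
        rw [hexpq]; field_simp
      rw [hZmaxeq, div_le_iff₀ hZ₁]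
      have : Real.exp q * Real.exp (-(q+1)) = Real.exp (-1) := by
        rw [← Real.exp_add]; ring_nf
      calc Real.exp q * gibbsZ c hc βmin * Real.exp (-(q+1))
          = Real.exp (-1) * gibbsZ c hc βmin := by rw [← this]; ring
        _ ≤ Real.exp (-1) * gibbsZ c hc β₁ :=
            mul_le_mul_of_nonneg_left hZmin₁ (Real.exp_pos _).le
    linarith [key, sum_eq ▸ key]
  · rw [Real.exp_neg, inv_le_comm₀ (Real.exp_pos 1) (by norm_num)]
    calc ((1:ℝ)/2)⁻¹ = 2 := by norm_num
      _ ≤ Real.exp 1 := by linarith [Real.add_one_le_exp (1:ℝ)]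
end

section
/- Let n ≥ 1, ε ∈ (0,1), and βmin ≤ βmax. Suppose π̂ : {0,…,n} → ℝ satisfies: π̂(i) = 0 whenever c_i = 0, and |π̂(i) − π(i)| ≤ 0.1·ε·π(i)·(1 + 1/(n·Δ(i))) whenever c_i > 0. Then for every α ∈ [βmin, βmax], e^{−ε}·Q(α) ≤ Σ_{i=0}^{n} π̂(i)·e^{(α−βmin)·i} ≤ e^{ε}·Q(α), where Q(α) = Z(α)/Z(βmin). (In particular, a solution of the count-estimation problem yields a universal ratio estimator with no further samples.) -/
/-- Partition function of an integer Gibbs distribution with counts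
`c_0, …, c_n`: `Z(β) = ∑_{k=0}^{n} c_k·e^{βk}`. -/
noncomputable def gibbsZInt (n : ℕ) (c : ℕ → ℝ) (β : ℝ) : ℝ :=
  ∑ k ∈ Finset.range (n + 1), c k * Real.exp (β * k)

/-- Induced Gibbs distribution: `μ_β(k) = c_k·e^{βk}/Z(β)`. -/
noncomputable def gibbsMuInt (n : ℕ) (c : ℕ → ℝ) (β : ℝ) (k : ℕ) : ℝ :=
  c k * Real.exp (β * k) / gibbsZInt n c β

/-- `Δ(k) = max_{β∈[βmin,βmax]} μ_β(k)`. -/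
noncomputable def gibbsDeltaInt (n : ℕ) (c : ℕ → ℝ) (βmin βmax : ℝ) (k : ℕ) : ℝ :=
  sSup ((fun β => gibbsMuInt n c β k) '' Set.Icc βmin βmax)

/-- If `π̂ : {0,…,n} → ℝ` satisfies `π̂(i) = 0` whenever `c_i = 0` and
`|π̂(i) − π(i)| ≤ 0.1·ε·π(i)·(1 + 1/(n·Δ(i)))` whenever `c_i > 0` (where
`π(i) = μ_{βmin}(i)`), then for every `α ∈ [βmin, βmax]`,
`e^{−ε}·Q(α) ≤ Σ_{i=0}^{n} π̂(i)·e^{(α−βmin)·i} ≤ e^{ε}·Q(α)`, where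
`Q(α) = Z(α)/Z(βmin)`. -/
theorem stmt_12 (n : ℕ) (hn : 1 ≤ n) (c : ℕ → ℝ)
    (hnonneg : ∀ k ≤ n, 0 ≤ c k) (hne : ∃ k ≤ n, c k ≠ 0)
    (ε : ℝ) (hε : ε ∈ Set.Ioo (0 : ℝ) 1)
    (βmin βmax : ℝ) (hββ : βmin ≤ βmax)
    (πhat : ℕ → ℝ)
    (hzero : ∀ i ≤ n, c i = 0 → πhat i = 0)
    (hclose : ∀ i ≤ n, 0 < c i →
      |πhat i - gibbsMuInt n c βmin i| ≤
        0.1 * ε * gibbsMuInt n c βmin i *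
          (1 + 1 / ((n : ℝ) * gibbsDeltaInt n c βmin βmax i))) :
    ∀ α ∈ Set.Icc βmin βmax,
      Real.exp (-ε) * (gibbsZInt n c α / gibbsZInt n c βmin) ≤
        (∑ i ∈ Finset.range (n + 1), πhat i * Real.exp ((α - βmin) * i))
      ∧ (∑ i ∈ Finset.range (n + 1), πhat i * Real.exp ((α - βmin) * i)) ≤
        Real.exp ε * (gibbsZInt n c α / gibbsZInt n c βmin) := by
  obtain ⟨hε0, hε1⟩ := hε
  obtain ⟨k0, hk0n, hk0⟩ := hne
  have hk0pos : 0 < c k0 := (hnonneg k0 hk0n).lt_of_ne (Ne.symm hk0)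
  have hterm_nonneg : ∀ (β : ℝ), ∀ j ∈ Finset.range (n + 1),
      0 ≤ c j * Real.exp (β * j) := fun β j hj =>
    mul_nonneg (hnonneg j (Finset.mem_range_succ_iff.mp hj)) (Real.exp_pos _).le
  have hZpos : ∀ β, 0 < gibbsZInt n c β := fun β =>
    Finset.sum_pos' (hterm_nonneg β)
      ⟨k0, Finset.mem_range_succ_iff.mpr hk0n, mul_pos hk0pos (Real.exp_pos _)⟩
  have hmu_le_one : ∀ β, ∀ i ≤ n, gibbsMuInt n c β i ≤ 1 := by
    intro β i hi
    rw [gibbsMuInt, div_le_one (hZpos β)]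
    exact Finset.single_le_sum (hterm_nonneg β) (Finset.mem_range_succ_iff.mpr hi)
  intro α hα
  have hn0 : (0 : ℝ) < n := by exact_mod_cast hn
  set Q : ℝ := gibbsZInt n c α / gibbsZInt n c βmin with hQdef
  have hQpos : 0 < Q := div_pos (hZpos α) (hZpos βmin)
  have hexp : ∀ i : ℕ, Real.exp (βmin * i) * Real.exp ((α - βmin) * i)
      = Real.exp (α * i) := by
    intro i; rw [← Real.exp_add]; congr 1; ring
  have hmuE : ∀ i : ℕ, gibbsMuInt n c βmin i * Real.exp ((α - βmin) * i)
      = gibbsMuInt n c α i * Q := by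
    intro i
    rw [gibbsMuInt, gibbsMuInt, hQdef, div_mul_eq_mul_div, mul_assoc, hexp]
    field_simp
    ring_nf
    rw [mul_assoc _ (gibbsZInt n c α), mul_inv_cancel₀ (hZpos α).ne', mul_one]
  have hsum_mu : ∑ i ∈ Finset.range (n + 1), gibbsMuInt n c α i = 1 := by
    simp only [gibbsMuInt]
    rw [← Finset.sum_div, ← gibbsZInt, div_self (hZpos α).ne']
  have hident : ∑ i ∈ Finset.range (n + 1),
      gibbsMuInt n c βmin i * Real.exp ((α - βmin) * i) = Q := by
    calc ∑ i ∈ Finset.range (n + 1),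
        gibbsMuInt n c βmin i * Real.exp ((α - βmin) * i)
        = ∑ i ∈ Finset.range (n + 1), gibbsMuInt n c α i * Q := by
          exact Finset.sum_congr rfl fun i _ => hmuE i
      _ = (∑ i ∈ Finset.range (n + 1), gibbsMuInt n c α i) * Q := by
          rw [Finset.sum_mul]
      _ = Q := by rw [hsum_mu, one_mul]
  have hBdd : ∀ i ≤ n, BddAbove ((fun β => gibbsMuInt n c β i) '' Set.Icc βmin βmax) := by
    intro i hi
    refine ⟨1, ?_⟩
    rintro x ⟨β, hβ, rfl⟩
    exact hmu_le_one β i hi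
  have hΔge : ∀ i ≤ n, gibbsMuInt n c α i ≤ gibbsDeltaInt n c βmin βmax i := by
    intro i hi
    exact le_csSup (hBdd i hi) ⟨α, hα, rfl⟩
  have hΔpos : ∀ i ≤ n, 0 < c i → 0 < gibbsDeltaInt n c βmin βmax i := by
    intro i hi hci
    have h1 : 0 < gibbsMuInt n c βmin i :=
      div_pos (mul_pos hci (Real.exp_pos _)) (hZpos βmin)
    exact h1.trans_le (le_csSup (hBdd i hi) ⟨βmin, ⟨le_refl _, hββ⟩, rfl⟩)
  have hμnn : ∀ i ≤ n, 0 ≤ gibbsMuInt n c α i := fun i hi =>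
    div_nonneg (mul_nonneg (hnonneg i hi) (Real.exp_pos _).le) (hZpos α).le
  -- per-term bound
  have hterm : ∀ i ∈ Finset.range (n + 1),
      |πhat i * Real.exp ((α - βmin) * i)
        - gibbsMuInt n c βmin i * Real.exp ((α - βmin) * i)|
      ≤ 0.1 * ε * (gibbsMuInt n c α i * Q + Q / n) := by
    intro i hi'
    have hi : i ≤ n := Finset.mem_range_succ_iff.mp hi'
    rcases eq_or_lt_of_le (hnonneg i hi) with h0 | hci
    · have hπ0 : πhat i = 0 := hzero i hi h0.symm
      have hμ0 : gibbsMuInt n c βmin i = 0 := by rw [gibbsMuInt, ← h0]; simp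
      have hμα : gibbsMuInt n c α i = 0 := by rw [gibbsMuInt, ← h0]; simp
      rw [hπ0, hμ0, hμα]
      simp only [zero_mul, sub_zero, abs_zero, mul_zero, zero_add]
      positivity
    · have h1 := hclose i hi hci
      have hΔ := hΔpos i hi hci
      have hμle := hΔge i hi
      set d : ℝ := gibbsDeltaInt n c βmin βmax i
      set m : ℝ := gibbsMuInt n c α i
      have key : |πhat i * Real.exp ((α - βmin) * i)
          - gibbsMuInt n c βmin i * Real.exp ((α - βmin) * i)|
          = |πhat i - gibbsMuInt n c βmin i| * Real.exp ((α - βmin) * i) := by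
        rw [← sub_mul, abs_mul, abs_of_pos (Real.exp_pos _)]
      rw [key]
      have hmain : |πhat i - gibbsMuInt n c βmin i| * Real.exp ((α - βmin) * i)
          ≤ (0.1 * ε * gibbsMuInt n c βmin i * (1 + 1 / ((n : ℝ) * d)))
            * Real.exp ((α - βmin) * i) :=
        mul_le_mul_of_nonneg_right h1 (Real.exp_pos _).le
      refine hmain.trans ?_
      have hre : (0.1 * ε * gibbsMuInt n c βmin i * (1 + 1 / ((n : ℝ) * d)))
          * Real.exp ((α - βmin) * i)
          = 0.1 * ε * ((gibbsMuInt n c βmin i * Real.exp ((α - βmin) * i))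
              + (1 / ((n : ℝ) * d)) * (gibbsMuInt n c βmin i
                * Real.exp ((α - βmin) * i))) := by ring
      rw [hre, hmuE i]
      have h3 : (1 / ((n : ℝ) * d)) * (m * Q) ≤ Q / n := by
        have hmq : m * Q ≤ d * Q := mul_le_mul_of_nonneg_right hμle hQpos.le
        calc (1 / ((n : ℝ) * d)) * (m * Q)
            ≤ (1 / ((n : ℝ) * d)) * (d * Q) := by
              apply mul_le_mul_of_nonneg_left hmq
              positivity
          _ = Q / n := by field_simp
      have h4 : 0.1 * ε * ((1 / ((n : ℝ) * d)) * (m * Q)) ≤ 0.1 * ε * (Q / n) :=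
        mul_le_mul_of_nonneg_left h3 (by positivity)
      nlinarith [h4]
  -- total error bound
  set S : ℝ := ∑ i ∈ Finset.range (n + 1), πhat i * Real.exp ((α - βmin) * i) with hSdef
  have herr : |S - Q| ≤ 0.3 * ε * Q := by
    have h5 : S - Q = ∑ i ∈ Finset.range (n + 1),
        (πhat i * Real.exp ((α - βmin) * i)
          - gibbsMuInt n c βmin i * Real.exp ((α - βmin) * i)) := by
      rw [Finset.sum_sub_distrib, hident.symm, hSdef]
    rw [h5]
    calc |∑ i ∈ Finset.range (n + 1),
        (πhat i * Real.exp ((α - βmin) * i)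
          - gibbsMuInt n c βmin i * Real.exp ((α - βmin) * i))|
        ≤ ∑ i ∈ Finset.range (n + 1),
          |πhat i * Real.exp ((α - βmin) * i)
            - gibbsMuInt n c βmin i * Real.exp ((α - βmin) * i)| :=
          Finset.abs_sum_le_sum_abs _ _
      _ ≤ ∑ i ∈ Finset.range (n + 1),
          0.1 * ε * (gibbsMuInt n c α i * Q + Q / n) :=
          Finset.sum_le_sum hterm
      _ = 0.1 * ε * (Q + (n + 1) * (Q / n)) := by
          rw [← Finset.mul_sum, Finset.sum_add_distrib, ← Finset.sum_mul, hsum_mu,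
            one_mul, Finset.sum_const, Finset.card_range]
          push_cast
          ring
      _ ≤ 0.3 * ε * Q := by
          have h6 : ((n : ℝ) + 1) * (Q / n) ≤ 2 * Q := by
            have hn1 : (1 : ℝ) ≤ (n : ℝ) := by exact_mod_cast hn
            rw [mul_div_assoc', div_le_iff₀ hn0]
            nlinarith [hn1, hQpos]
          nlinarith [hε0, hQpos]
  have habs := abs_le.mp herr
  have hexp1 : 1 + ε ≤ Real.exp ε := by linarith [Real.add_one_le_exp ε]
  constructor
  · have hlo : Real.exp (-ε) ≤ 1 - 0.3 * ε := by
      have h7 : Real.exp (-ε) * Real.exp ε = 1 := by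
        rw [← Real.exp_add]; simp
      nlinarith [Real.exp_pos (-ε), hexp1, hε0, hε1]
    have := mul_le_mul_of_nonneg_right hlo hQpos.le
    nlinarith [habs.1]
  · have hhi : 1 + 0.3 * ε ≤ Real.exp ε := by nlinarith [hexp1, hε0]
    have := mul_le_mul_of_nonneg_right hhi hQpos.le
    nlinarith [habs.2]
end

section
/- For every integer m ≥ 1 and every real β, Σ_{k=0}^{m−1} e^{k}·e^{β}/(e^{k}+e^{β})² ≤ 4. (This shows that the lower-bound instance with log partition function z(β) = m·β + Σ_{k=0}^{m−1} log(e^{k}+e^{β}) has curvature κ = sup_β z″(β) ≤ 4.) -/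
/-- For every integer `m ≥ 1` and every real `β`,
`Σ_{k=0}^{m−1} e^k·e^β/(e^k+e^β)² ≤ 4`; i.e. the lower-bound instance with
`z(β) = m·β + Σ_{k=0}^{m−1} log(e^k+e^β)` has curvature `sup_β z″(β) ≤ 4`. -/
theorem stmt_14 (m : ℕ) (hm : 1 ≤ m) (β : ℝ) :
    ∑ k ∈ Finset.range m,
        Real.exp k * Real.exp β / (Real.exp k + Real.exp β) ^ 2 ≤ 4 := by
  set E := Real.exp β with hE
  have hEpos : 0 < E := Real.exp_pos β
  set C : ℝ := Real.exp 1 / (Real.exp 1 - 1) with hC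
  have he1 : (1:ℝ) < Real.exp 1 := by
    have := Real.add_one_lt_exp (x := 1) one_ne_zero; linarith
  have hCpos : 0 < C := div_pos (by positivity) (by linarith)
  have hCle : C ≤ 4 := by
    rw [hC, div_le_iff₀ (by linarith)]
    nlinarith [Real.exp_one_gt_d9]
  set s : ℕ → ℝ := fun k => Real.exp k / (Real.exp k + E) with hs
  have key : ∀ k : ℕ, Real.exp k * E / (Real.exp k + E) ^ 2 ≤ C * (s (k+1) - s k) := by
    intro k
    have ha : (0:ℝ) < Real.exp k := Real.exp_pos _
    have hab : 0 < Real.exp k + E := by linarith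
    have hexp : Real.exp ((k+1 : ℕ) : ℝ) = Real.exp 1 * Real.exp k := by
      push_cast
      rw [← Real.exp_add]
      ring_nf
    have hab1 : 0 < Real.exp 1 * Real.exp k + E := by positivity
    have hdiff : s (k+1) - s k = (Real.exp 1 - 1) * (Real.exp k * E) /
        ((Real.exp 1 * Real.exp k + E) * (Real.exp k + E)) := by
      simp only [hs, hexp]
      field_simp
      ring
    rw [hdiff, hC]
    have hne : Real.exp 1 - 1 ≠ 0 := by linarith
    have hsimp : Real.exp 1 / (Real.exp 1 - 1) * ((Real.exp 1 - 1) * (Real.exp k * E) /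
        ((Real.exp 1 * Real.exp k + E) * (Real.exp k + E))) =
        Real.exp 1 * (Real.exp k * E) / ((Real.exp 1 * Real.exp k + E) * (Real.exp k + E)) := by
      field_simp
    rw [hsimp, div_le_div_iff₀ (by positivity) (by positivity)]
    nlinarith [mul_nonneg (mul_nonneg (mul_pos ha hEpos).le hab.le) (mul_nonneg hEpos.le (by linarith : (0:ℝ) ≤ Real.exp 1 - 1))]
  calc ∑ k ∈ Finset.range m, Real.exp k * E / (Real.exp k + E) ^ 2
      ≤ ∑ k ∈ Finset.range m, C * (s (k+1) - s k) :=
        Finset.sum_le_sum fun k _ => key k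
    _ = C * (s m - s 0) := by rw [← Finset.mul_sum, Finset.sum_range_sub]
    _ ≤ C * 1 := by
        apply mul_le_mul_of_nonneg_left _ hCpos.le
        have h1 : s m ≤ 1 := by
          rw [hs]
          have : 0 < Real.exp m + E := by positivity
          rw [div_le_one this]
          linarith
        have h0 : 0 ≤ s 0 := by positivity
        linarith
    _ = C := mul_one C
    _ ≤ 4 := hCle
end

section
/- For every integer m ≥ 1, ∏_{k=0}^{m−1} e^{k}/(e^{k}+1) ≥ e^{−2}; and for every integer m ≥ 1 and every real β ≥ m, ∏_{k=0}^{m−1} e^{β}/(e^{k}+e^{β}) ≥ e^{−2}. (These show that for the lower-bound instance with partition function Z(β) = e^{mβ}·∏_{k=0}^{m−1}(e^{k}+e^{β}), the Gibbs probabilities μ_0(m) and μ_β(2m) for β ≥ m are each at least the constant e^{−2}.) -/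
/-!
Write each factor as `(1 + a_k)⁻¹` with `a_k = e^{-k}`, resp. `a_k = e^{k-β}`. Since
`1 + a ≤ e^a`, the product is at least `exp (-∑ a_k)`, so it suffices that `∑ a_k ≤ 2`.
For `a_k = e^{-k}` this is the geometric bound `1 / (1 - e⁻¹) ≤ 2`; for `β ≥ m`,
`e^{k-β} ≤ e^{-(m-1-k)}`, which reduces the second sum to the first after reflecting `k ↦ m-1-k`.
-/

open Finset Real

theorem exp_neg_le_prod_inv_one_add {ι : Type*} (s : Finset ι) (a : ι → ℝ) {c : ℝ}
    (ha : ∀ i ∈ s, 0 ≤ a i) (hsum : ∑ i ∈ s, a i ≤ c) : exp (-c) ≤ ∏ i ∈ s, (1 + a i)⁻¹ := by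
  refine (exp_le_exp.2 (neg_le_neg hsum)).trans ?_
  rw [← sum_neg_distrib, exp_sum]
  refine prod_le_prod (fun i _ => (exp_pos _).le) fun i hi => ?_
  rw [exp_neg]
  exact inv_anti₀ (by linarith [ha i hi]) (by linarith [add_one_le_exp (a i)])

theorem sum_range_exp_neg_le_two (m : ℕ) : ∑ k ∈ range m, exp (-(k : ℝ)) ≤ 2 := by
  have hpow (k : ℕ) : exp (-(k : ℝ)) = exp (-1) ^ k := by
    rw [← exp_nat_mul]; ring_nf
  have hhalf : exp (-1) < 1 / 2 := exp_neg_one_lt_half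
  calc ∑ k ∈ range m, exp (-(k : ℝ)) = ∑ k ∈ Ico 0 m, exp (-1) ^ k := by
        simp only [hpow, range_eq_Ico]
    _ ≤ exp (-1) ^ 0 / (1 - exp (-1)) :=
        geom_sum_Ico_le_of_lt_one (exp_pos _).le (by linarith)
    _ ≤ 2 := by rw [pow_zero, div_le_iff₀ (by linarith)]; linarith

theorem sum_range_exp_sub_le_two (m : ℕ) (β : ℝ) (hβ : (m : ℝ) ≤ β) :
    ∑ k ∈ range m, exp ((k : ℝ) - β) ≤ 2 := by
  calc ∑ k ∈ range m, exp ((k : ℝ) - β)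
      ≤ ∑ k ∈ range m, exp (-((m - 1 - k : ℕ) : ℝ)) := by
        refine sum_le_sum fun k hk => exp_le_exp.2 ?_
        have hk : ((m - 1 - k : ℕ) : ℝ) + k + 1 = m := by
          exact_mod_cast (by rw [mem_range] at hk; omega : m - 1 - k + k + 1 = m)
        linarith
    _ = ∑ k ∈ range m, exp (-(k : ℝ)) := sum_range_reflect (fun j => exp (-(j : ℝ))) m
    _ ≤ 2 := sum_range_exp_neg_le_two m

theorem stmt_16_general (m : ℕ) :
    Real.exp (-2) ≤ ∏ k ∈ Finset.range m, Real.exp k / (Real.exp k + 1)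
    ∧ ∀ β : ℝ, (m : ℝ) ≤ β →
        Real.exp (-2) ≤ ∏ k ∈ Finset.range m, Real.exp β / (Real.exp k + Real.exp β) := by
  constructor
  · have hfactor (k : ℕ) : exp k / (exp k + 1) = (1 + exp (-(k : ℝ)))⁻¹ := by
      rw [exp_neg]; field_simp
    simp only [hfactor]
    exact exp_neg_le_prod_inv_one_add _ _ (fun k _ => (exp_pos _).le)
      (sum_range_exp_neg_le_two m)
  · intro β hβ
    have hfactor (k : ℕ) : exp β / (exp k + exp β) = (1 + exp ((k : ℝ) - β))⁻¹ := by
      rw [exp_sub]; field_simp; ring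
    simp only [hfactor]
    exact exp_neg_le_prod_inv_one_add _ _ (fun k _ => (exp_pos _).le)
      (sum_range_exp_sub_le_two m β hβ)

/-- For every integer `m ≥ 1`, `∏_{k=0}^{m−1} e^k/(e^k+1) ≥ e^{−2}`; and for
every real `β ≥ m`, `∏_{k=0}^{m−1} e^β/(e^k+e^β) ≥ e^{−2}`.  (For the
lower-bound instance with `Z(β) = e^{mβ}·∏_{k=0}^{m−1}(e^k+e^β)`, the Gibbs
probabilities `μ_0(m)` and `μ_β(2m)` for `β ≥ m` are at least `e^{−2}`.) -/
theorem stmt_16 (m : ℕ) (hm : 1 ≤ m) :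
    Real.exp (-2) ≤ ∏ k ∈ Finset.range m, Real.exp k / (Real.exp k + 1)
    ∧ ∀ β : ℝ, (m : ℝ) ≤ β →
        Real.exp (-2) ≤ ∏ k ∈ Finset.range m, Real.exp β / (Real.exp k + Real.exp β) :=
  stmt_16_general m
end

section
/- Suppose n ≥ 1, the counts c_0, …, c_n are all positive and log-concave, and βmin ≤ log(c_0/c_1) and βmax ≥ log(c_{n−1}/c_n). Then for every k ∈ {0,…,n} there exists β ∈ [βmin, βmax] with μ_β(k) ≥ 1/(n+1); that is, Δ(k) = max_{β∈[βmin,βmax]} μ_β(k) ≥ 1/(n+1) for every k. -/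
private lemma ratio_mono (n : ℕ) (c : ℕ → ℝ) (hpos : ∀ k ≤ n, 0 < c k)
    (hlc : ∀ k, 1 ≤ k → k + 1 ≤ n → c (k - 1) * c (k + 1) ≤ c k ^ 2) :
    ∀ i j, 1 ≤ i → i ≤ j → j ≤ n → c (i - 1) * c j ≤ c i * c (j - 1) := by
  intro i j hi hij hjn
  induction j, hij using Nat.le_induction with
  | base => exact (mul_comm _ _).le
  | succ j hij ih =>
    have hjn' : j ≤ n := by omega
    have ihj := ih hjn'
    have hlcj := hlc j (by omega) (by omega)
    have h0 : 0 < c (j - 1) := hpos _ (by omega)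
    have h1 : 0 < c j := hpos _ hjn'
    have h2 : 0 < c (j + 1) := hpos _ hjn
    have h3 : 0 < c (i - 1) := hpos _ (by omega)
    have h4 : 0 < c i := hpos _ (by omega)
    have heq : (j + 1) - 1 = j := rfl
    rw [heq]
    nlinarith [mul_le_mul_of_nonneg_right ihj h2.le,
      mul_le_mul_of_nonneg_left hlcj h4.le]

/-- If the counts `c_0, …, c_n` are positive and log-concave,
`βmin ≤ log(c_0/c_1)` and `βmax ≥ log(c_{n−1}/c_n)`, then for every
`k ∈ {0,…,n}` there exists `β ∈ [βmin, βmax]` with `μ_β(k) ≥ 1/(n+1)`;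
i.e. `Δ(k) ≥ 1/(n+1)` for every `k`. -/
theorem stmt_17 (n : ℕ) (hn : 1 ≤ n) (c : ℕ → ℝ)
    (hpos : ∀ k ≤ n, 0 < c k)
    (hlogconcave : ∀ k, 1 ≤ k → k + 1 ≤ n → c (k - 1) * c (k + 1) ≤ c k ^ 2)
    (βmin βmax : ℝ)
    (hβmin : βmin ≤ Real.log (c 0 / c 1))
    (hβmax : Real.log (c (n - 1) / c n) ≤ βmax) :
    ∀ k ≤ n, ∃ β ∈ Set.Icc βmin βmax,
      1 / ((n : ℝ) + 1) ≤ gibbsMuInt n c β k := by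
  intro k hk
  set m : ℕ := max k 1 with hm
  have hm1 : 1 ≤ m := le_max_right _ _
  have hmn : m ≤ n := by omega
  have hcm : 0 < c m := hpos _ hmn
  have hcm1 : 0 < c (m - 1) := hpos _ (by omega)
  set r : ℝ := c (m - 1) / c m with hr
  have hrpos : 0 < r := div_pos hcm1 hcm
  set β : ℝ := Real.log r with hβ
  have hexp : Real.exp β = r := Real.exp_log hrpos
  -- β is within bounds
  have hc0 : 0 < c 0 := hpos 0 (by omega)
  have hc1 : 0 < c 1 := hpos 1 hn
  have hcn : 0 < c n := hpos n le_rfl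
  have hcn1 : 0 < c (n - 1) := hpos _ (by omega)
  have hlow : βmin ≤ β := by
    refine hβmin.trans (Real.log_le_log (div_pos hc0 hc1) ?_)
    rw [div_le_div_iff₀ hc1 hcm]
    have := ratio_mono n c hpos hlogconcave 1 m le_rfl hm1 hmn
    simpa [mul_comm] using this
  have hhigh : β ≤ βmax := by
    refine (Real.log_le_log hrpos ?_).trans hβmax
    rw [div_le_div_iff₀ hcm hcn]
    have := ratio_mono n c hpos hlogconcave m n hm1 hmn le_rfl
    linarith [this]
  refine ⟨β, ⟨hlow, hhigh⟩, ?_⟩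
  -- the term function
  set t : ℕ → ℝ := fun j => c j * r ^ j with ht
  have hterm : ∀ j, c j * Real.exp (β * j) = t j := by
    intro j
    rw [mul_comm β (j : ℝ), Real.exp_nat_mul, hexp]
  have htpos : ∀ j ≤ n, 0 < t j := fun j hj =>
    mul_pos (hpos j hj) (pow_pos hrpos j)
  -- step up: for j+1 ≤ m, t j ≤ t (j+1)
  have step_up : ∀ j, j + 1 ≤ m → t j ≤ t (j + 1) := by
    intro j hj
    have h := ratio_mono n c hpos hlogconcave (j + 1) m (by omega) hj hmn
    have heq : (j + 1) - 1 = j := rfl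
    rw [heq] at h
    have hcj1 : 0 < c (j + 1) := hpos _ (by omega)
    have hstep : c j ≤ c (j + 1) * r := by
      rw [hr, ← mul_div_assoc, le_div_iff₀ hcm]
      linarith [h]
    calc t j = c j * r ^ j := rfl
      _ ≤ (c (j + 1) * r) * r ^ j :=
          mul_le_mul_of_nonneg_right hstep (pow_nonneg hrpos.le j)
      _ = c (j + 1) * r ^ (j + 1) := by ring
  -- step down: for m ≤ j+1 ≤ n, t (j+1) ≤ t j
  have step_down : ∀ j, m ≤ j + 1 → j + 1 ≤ n → t (j + 1) ≤ t j := by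
    intro j hj hjn
    have h := ratio_mono n c hpos hlogconcave m (j + 1) hm1 hj hjn
    have heq : (j + 1) - 1 = j := rfl
    rw [heq] at h
    have hcj1 : 0 < c (j + 1) := hpos _ hjn
    have hstep : c (j + 1) * r ≤ c j := by
      rw [hr, ← mul_div_assoc, div_le_iff₀ hcm]
      nlinarith [h]
    calc t (j + 1) = (c (j + 1) * r) * r ^ j := by
          simp only [ht]; ring
      _ ≤ c j * r ^ j :=
          mul_le_mul_of_nonneg_right hstep (pow_nonneg hrpos.le j)
  -- t j ≤ t k for all j ≤ n
  have hmax : ∀ j ≤ n, t j ≤ t k := by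
    intro j hjn
    rcases le_or_gt j k with hjk | hkj
    · -- monotone up to k
      have g_mono : Monotone (fun i => t (min i k)) := by
        apply monotone_nat_of_le_succ
        intro i
        rcases le_or_gt (i + 1) k with h | h
        · have : min i k = i := by omega
          have h2 : min (i + 1) k = i + 1 := by omega
          rw [this, h2]
          exact step_up i (by omega)
        · have : min i k = min (i + 1) k := by omega
          rw [this]
      have := g_mono hjk
      simpa [min_eq_left hjk, min_self] using this
    · -- antitone beyond k
      have g_anti : Antitone (fun i => t (max (min i n) k)) := by
        apply antitone_nat_of_succ_le
        intro i
        rcases le_or_gt n i with h | h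
        · have : max (min i n) k = max (min (i + 1) n) k := by omega
          rw [this]
        · rcases le_or_gt (i + 1) k with h2 | h2
          · have : max (min i n) k = max (min (i + 1) n) k := by omega
            rw [this]
          · have e1 : max (min (i + 1) n) k = i + 1 := by omega
            have e2 : max (min i n) k = max i k := by omega
            rw [e1, e2]
            rcases le_or_gt k i with h3 | h3
            · rw [max_eq_left h3]
              exact step_down i (by omega) (by omega)
            · have : i + 1 = k := by omega
              rw [max_eq_right h3.le, this]
      have := g_anti hkj.le
      have e3 : max (min j n) k = j := by omega
      have e4 : max (min k n) k = k := by omega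
      simpa [e3, e4] using this
  -- sum bound
  have hZ : gibbsZInt n c β ≤ ((n : ℝ) + 1) * t k := by
    have : gibbsZInt n c β = ∑ j ∈ Finset.range (n + 1), t j := by
      unfold gibbsZInt
      exact Finset.sum_congr rfl fun j _ => hterm j
    rw [this]
    calc ∑ j ∈ Finset.range (n + 1), t j
        ≤ ∑ _j ∈ Finset.range (n + 1), t k := by
          apply Finset.sum_le_sum
          intro j hj
          exact hmax j (by simpa using Finset.mem_range_succ_iff.mp hj)
      _ = ((n : ℝ) + 1) * t k := by
          rw [Finset.sum_const, Finset.card_range]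
          push_cast
          ring
  have hZpos : 0 < gibbsZInt n c β := by
    unfold gibbsZInt
    apply Finset.sum_pos
    · intro j hj
      exact mul_pos (hpos j (Finset.mem_range_succ_iff.mp hj))
        (Real.exp_pos _)
    · exact ⟨0, Finset.mem_range.mpr (by omega)⟩
  have htk : 0 < t k := htpos k hk
  unfold gibbsMuInt
  rw [hterm k, div_le_div_iff₀ (by positivity) hZpos]
  calc 1 * gibbsZInt n c β = gibbsZInt n c β := one_mul _
    _ ≤ ((n : ℝ) + 1) * t k := hZ
    _ = t k * ((n : ℝ) + 1) := mul_comm _ _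
end
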